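/- Let κ be a positive integer and (t_n) a sequence of integers with t_{n+1} = 2(κ+1)·t_n − t_{n−1} + κ, and suppose κ·(t_n + 2·t_n·t_{n−1} + t_{n−1}) − (t_n − t_{n−1})² = γ holds for all n ≥ 1. Then T_{t_{n+1}} = (4(κ+1)² − 2)·T_{t_n} − T_{t_{n−1}} + (T_κ − γ) for all n ≥ 1, where T_x = x(x+1)/2 extended to integers. -/
import Mathlib

def Tz (x : ℤ) : ℤ := x * (x + 1) / 2

lemma two_Tz (x : ℤ) : 2 * Tz x = x * (x + 1) := by
  unfold Tz
  rw [mul_comm]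
  exact Int.ediv_mul_cancel (Int.even_mul_succ_self x).two_dvd

theorem stmt_17 (κ γ : ℤ) (hκ : 0 < κ) (t : ℕ → ℤ)
    (hrec : ∀ n, t (n + 2) = 2 * (κ + 1) * t (n + 1) - t n + κ)
    (hinv : ∀ n, κ * (t (n + 1) + 2 * t (n + 1) * t n + t n)
        - (t (n + 1) - t n)^2 = γ) :
    ∀ n, Tz (t (n + 2)) =
      (4 * (κ + 1)^2 - 2) * Tz (t (n + 1)) - Tz (t n) + (Tz κ - γ) := by
  intro n
  have h2 : (2:ℤ) ≠ 0 := by norm_num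
  apply mul_left_cancel₀ h2
  have e1 := two_Tz (t (n+2))
  have e2 := two_Tz (t (n+1))
  have e3 := two_Tz (t n)
  have e4 := two_Tz κ
  have hr := hrec n
  have hi := hinv n
  rw [hr] at e1 ⊢
  linear_combination e1 - (4 * (κ + 1)^2 - 2) * e2 + e3 - e4 - 2 * hi
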